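/- Let E and E' be finite connected f_ms-BGs whose Nakayama automorphisms σ and σ' have the same order, and suppose E/⟨σ⟩ and E'/⟨σ'⟩ are isomorphic as Brauer G-sets to a common modified Brauer graph B having exactly 2 double half-edges, k edges, n = k + 1 vertices, and all vertices of f-degree 1. Then E and E' are isomorphic as Brauer G-sets. -/

import Mathlib

namespace FB

/-- The data of a Brauer `G`-set for `G = ⟨g⟩` infinite cyclic:
a `ℤ`-set `E` (where `act n` is the action of `g^n`), a subset `U`,
an involution `tau` on `U` (encoded as a total map, junk outside `U`),
and a degree function `d`. -/
structure BrauerData where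
  E : Type
  act : ℤ → E → E
  U : Set E
  tau : E → E
  d : E → ℕ

namespace BrauerData

/-- The Nakayama automorphism `σ(e) = g^(d e) · e`. -/
def sigma (B : BrauerData) (e : B.E) : B.E := B.act (B.d e) e

/-- The axioms making the data a Brauer `G`-set. -/
structure IsBrauer (B : BrauerData) : Prop where
  act_zero : ∀ e, B.act 0 e = e
  act_add : ∀ (m n : ℤ) (e : B.E), B.act (m + n) e = B.act m (B.act n e)
  dpos : ∀ e, 0 < B.d e
  d_act : ∀ (n : ℤ) (e : B.E), B.d (B.act n e) = B.d e
  tau_mem : ∀ e ∈ B.U, B.tau e ∈ B.U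
  tau_invol : ∀ e ∈ B.U, B.tau (B.tau e) = e
  sigma_mem : ∀ e, e ∈ B.U ↔ B.sigma e ∈ B.U
  tau_sigma : ∀ e ∈ B.U, B.tau (B.sigma e) = B.sigma (B.tau e)

end BrauerData

/-- The letters of walks: `g`, `g⁻¹`, `τ`. -/
inductive Step : Type
  | g : Step
  | ginv : Step
  | tau : Step
  deriving DecidableEq

namespace BrauerData

/-- Apply one step. -/
def stepFun (B : BrauerData) : Step → B.E → B.E
  | Step.g, e => B.act 1 e
  | Step.ginv, e => B.act (-1) e
  | Step.tau, e => B.tau e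

/-- Terminal of the walk starting at `e` with steps `l` (listed in order of application). -/
def endpt (B : BrauerData) : B.E → List Step → B.E
  | e, [] => e
  | e, s :: l => B.endpt (B.stepFun s e) l

/-- The condition for a list of steps from `e` to be a walk:
both endpoints of a `τ`-step must lie in `U`. -/
def IsValid (B : BrauerData) : B.E → List Step → Prop
  | _, [] => True
  | e, s :: l => (s = Step.tau → e ∈ B.U ∧ B.tau e ∈ B.U) ∧ B.IsValid (B.stepFun s e) l

/-- A Brauer `G`-set is connected if any two half-edges are joined by a walk. -/
def Connected (B : BrauerData) : Prop :=
  ∀ x y : B.E, ∃ l : List Step, B.IsValid x l ∧ B.endpt x l = y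

/-- A closed walk at `e`. -/
def Closed (B : BrauerData) (e : B.E) (l : List Step) : Prop :=
  B.IsValid e l ∧ B.endpt e l = e

theorem endpt_append (B : BrauerData) (e : B.E) (l₁ l₂ : List Step) :
    B.endpt e (l₁ ++ l₂) = B.endpt (B.endpt e l₁) l₂ := by
  induction l₁ generalizing e with
  | nil => rfl
  | cons s l ih => simpa [endpt] using ih (B.stepFun s e)

theorem isValid_append (B : BrauerData) (e : B.E) (l₁ l₂ : List Step) :
    B.IsValid e (l₁ ++ l₂) ↔ B.IsValid e l₁ ∧ B.IsValid (B.endpt e l₁) l₂ := by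
  induction l₁ generalizing e with
  | nil => simp [IsValid, endpt]
  | cons s l ih =>
    simp only [List.cons_append, IsValid, endpt, List.append_eq, ih]
    tauto

end BrauerData

/-- The walk `g^n` (as a list of steps). -/
def gSteps (n : ℤ) : List Step :=
  if 0 ≤ n then List.replicate n.toNat Step.g else List.replicate (-n).toNat Step.ginv

/-- The homotopy relation `≈` on walks of a Brauer `G`-set, relative to a common
source `e`.  It is the equivalence relation generated by (mh1), (mh2), (mh3). -/
inductive Htp (B : BrauerData) : B.E → List Step → List Step → Prop
  | refl (e : B.E) (l : List Step) (h : B.IsValid e l) : Htp B e l l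
  | symm {e : B.E} {l₁ l₂ : List Step} : Htp B e l₁ l₂ → Htp B e l₂ l₁
  | trans {e : B.E} {l₁ l₂ l₃ : List Step} :
      Htp B e l₁ l₂ → Htp B e l₂ l₃ → Htp B e l₁ l₃
  | gginv (e : B.E) : Htp B e [Step.g, Step.ginv] []
  | ginvg (e : B.E) : Htp B e [Step.ginv, Step.g] []
  | tautau (e : B.E) (h : e ∈ B.U) : Htp B e [Step.tau, Step.tau] []
  | square (e : B.E) (h : e ∈ B.U) :
      Htp B e (List.replicate (B.d e) Step.g ++ [Step.tau])
              (Step.tau :: List.replicate (B.d (B.tau e)) Step.g)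
  | post {e : B.E} {l₁ l₂ : List Step} (u : List Step) (h : Htp B e l₁ l₂)
      (hu : B.IsValid (B.endpt e l₁) u) : Htp B e (l₁ ++ u) (l₂ ++ u)
  | pre {l₁ l₂ : List Step} (e : B.E) (v : List Step) (hv : B.IsValid e v)
      (h : Htp B (B.endpt e v) l₁ l₂) : Htp B e (v ++ l₁) (v ++ l₂)

/-- Morphisms of Brauer `G`-sets. -/
def IsMorphism (B B' : BrauerData) (f : B.E → B'.E) : Prop :=
  (∀ (n : ℤ) (e : B.E), f (B.act n e) = B'.act n (f e)) ∧
  (∀ e ∈ B.U, f e ∈ B'.U) ∧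
  (∀ e ∈ B.U, f (B.tau e) = B'.tau (f e)) ∧
  (∀ e, B'.d (f e) = B.d e)

/-- Coverings of Brauer `G`-sets. -/
def IsCovering (B B' : BrauerData) (f : B.E → B'.E) : Prop :=
  (∀ (n : ℤ) (e : B.E), f (B.act n e) = B'.act n (f e)) ∧
  (∀ e, e ∈ B.U ↔ f e ∈ B'.U) ∧
  (∀ e ∈ B.U, f (B.tau e) = B'.tau (f e)) ∧
  (∀ e, B'.d (f e) = B.d e)

/-- Isomorphisms of Brauer `G`-sets: invertible morphisms whose inverse is a morphism. -/
def IsIsoBrauer (B B' : BrauerData) : Prop :=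
  ∃ (f : B.E → B'.E) (h : B'.E → B.E), IsMorphism B B' f ∧ IsMorphism B' B h ∧
    (∀ x, h (f x) = x) ∧ (∀ y, f (h y) = y)

/-- Closed walks at a basepoint. -/
def ClosedWalk (B : BrauerData) (e : B.E) : Type := {l : List Step // B.Closed e l}

/-- Composition (concatenation) of closed walks. -/
def ClosedWalk.comp {B : BrauerData} {e : B.E} (w v : ClosedWalk B e) :
    ClosedWalk B e :=
  ⟨w.1 ++ v.1, by
    obtain ⟨hw1, hw2⟩ := w.2
    obtain ⟨hv1, hv2⟩ := v.2
    refine ⟨?_, ?_⟩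
    · rw [B.isValid_append]
      exact ⟨hw1, by rw [hw2]; exact hv1⟩
    · rw [B.endpt_append, hw2, hv2]⟩

/-- The fundamental group `Π_m(E, e)` of a Brauer `G`-set: homotopy classes of
closed walks at `e` (as a set; the group structure is given by `ClosedWalk.comp`). -/
def Pi1 (B : BrauerData) (e : B.E) : Type :=
  Quot (fun w v : ClosedWalk B e => Htp B e w.1 v.1)

/-- Walks from `x` to `y`. -/
def Walks (B : BrauerData) (x y : B.E) : Type :=
  {l : List Step // B.IsValid x l ∧ B.endpt x l = y}

/-- Composition (concatenation) of walks. -/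
def Walks.comp {B : BrauerData} {x y z : B.E} (u : Walks B x y) (v : Walks B y z) :
    Walks B x z :=
  ⟨u.1 ++ v.1, by
    obtain ⟨hu1, hu2⟩ := u.2
    obtain ⟨hv1, hv2⟩ := v.2
    refine ⟨?_, ?_⟩
    · rw [B.isValid_append]
      exact ⟨hu1, by rw [hu2]; exact hv1⟩
    · rw [B.endpt_append, hu2, hv2]⟩

/-- Hom-sets of the fundamental groupoid `Π_m(E, A)`: homotopy classes of walks
from `x` to `y`. -/
def WalkCls (B : BrauerData) (x y : B.E) : Type :=
  Quot (fun u v : Walks B x y => Htp B x u.1 v.1)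

/-- Composition in the fundamental groupoid. -/
def WalkCls.comp {B : BrauerData} {x y z : B.E} :
    WalkCls B x y → WalkCls B y z → WalkCls B x z := by
  refine Quot.lift (fun u => Quot.lift
      (fun v : Walks B y z => Quot.mk _ (u.comp v)) ?_) ?_
  · intro v₁ v₂ hv
    apply Quot.sound
    show Htp B x (u.1 ++ v₁.1) (u.1 ++ v₂.1)
    refine Htp.pre x u.1 u.2.1 ?_
    rw [u.2.2]
    exact hv
  · intro u₁ u₂ hu
    funext v
    induction v using Quot.ind with
    | _ v =>
      show Quot.mk _ (u₁.comp v) = Quot.mk _ (u₂.comp v)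
      apply Quot.sound
      show Htp B x (u₁.1 ++ v.1) (u₂.1 ++ v.1)
      refine Htp.post v.1 hu ?_
      rw [u₁.2.2]
      exact v.2.1

/-- `r` is the order of the Nakayama automorphism. -/
def IsOrderOf (B : BrauerData) (r : ℕ) : Prop :=
  0 < r ∧ (∀ x, B.sigma^[r] x = x) ∧
    ∀ j : ℕ, 0 < j → (∀ x, B.sigma^[j] x = x) → r ≤ j

/-- The reduced homotopy relation `≈'` (relative to the order `r` of the Nakayama
automorphism): `w ≈' v` iff `w ≈ (t w | g^(k·r·d(t w)) | t v) v` for some `k : ℤ`. -/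
def RedHtp (B : BrauerData) (r : ℕ) (e : B.E) (l₁ l₂ : List Step) : Prop :=
  ∃ k : ℤ, Htp B e l₁ (l₂ ++ gSteps (k * (r : ℤ) * (B.d (B.endpt e l₁) : ℤ)))

/-- One step of the `⟨σ⟩`-orbit relation. -/
def sigmaRel (B : BrauerData) (x y : B.E) : Prop := B.sigma x = y

/-- One step of the `G`-orbit (vertex) relation. -/
def vertexRel (B : BrauerData) (x y : B.E) : Prop := B.act 1 x = y

/-- Vertices of a Brauer `G`-set: the `G`-orbits. -/
def VertexQuot (B : BrauerData) : Type := Quot (vertexRel B)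

/-- Edges of a Brauer `G`-set: pairs `{e, τ e}` with `e ∈ U`, `τ e ≠ e`. -/
def EdgeQuot (B : BrauerData) : Type :=
  Quot (fun a b : {e : B.E // e ∈ B.U ∧ B.tau e ≠ e} => B.tau a.1 = b.1)

/-- Every vertex is finite and has integral f-degree. -/
def IntegralFDegree (B : BrauerData) : Prop :=
  ∀ e : B.E, ∃ m : ℕ, 0 < m ∧ B.act m e = e ∧
    (∀ j : ℕ, 0 < j → B.act j e = e → m ≤ j) ∧ m ∣ B.d e

/-- The group `⟨σ⟩` is admissible: no `⟨σ⟩`-orbit contains both half-edges of an edge. -/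
def SigmaAdmissible (B : BrauerData) : Prop :=
  ∀ e : B.E, ¬ Relation.EqvGen (sigmaRel B) e (B.tau e)

/-- The quotient `E/⟨σ⟩` of an `f_ms`-BG by the group generated by its
Nakayama automorphism. -/
def sigmaQuot (B : BrauerData) (hB : B.IsBrauer) (hU : B.U = Set.univ) : BrauerData where
  E := Quot (sigmaRel B)
  act := fun n => Quot.lift (fun x => Quot.mk (sigmaRel B) (B.act n x))
    (fun x y hxy => by
      apply Quot.sound
      unfold sigmaRel at *
      subst hxy
      show B.sigma (B.act n x) = B.act n (B.sigma x)
      unfold BrauerData.sigma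
      rw [hB.d_act, ← hB.act_add, ← hB.act_add, add_comm])
  U := Quot.mk (sigmaRel B) '' B.U
  tau := Quot.lift (fun x => Quot.mk (sigmaRel B) (B.tau x))
    (fun x y hxy => by
      apply Quot.sound
      unfold sigmaRel at *
      subst hxy
      show B.sigma (B.tau x) = B.tau (B.sigma x)
      exact (hB.tau_sigma x (by rw [hU]; trivial)).symm)
  d := Quot.lift B.d
    (fun x y hxy => by
      unfold sigmaRel at hxy
      subst hxy
      show B.d x = B.d (B.sigma x)
      unfold BrauerData.sigma
      rw [hB.d_act])

open Classical in
/-- The quotient `E/Π` of a Brauer `G`-set by a group `Π` of automorphisms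
(given by a group `Γ` acting by automorphisms via `ρ`). -/
noncomputable def quotData (B : BrauerData) (Γ : Type) [Group Γ]
    (ρ : Γ →* Equiv.Perm B.E) (hρ : ∀ γ : Γ, IsMorphism B B (ρ γ)) : BrauerData where
  E := Quot (fun x y : B.E => ∃ γ : Γ, ρ γ x = y)
  act := fun n => Quot.lift (fun x => Quot.mk _ (B.act n x))
    (fun x y hxy => by
      obtain ⟨γ, hγ⟩ := hxy
      exact Quot.sound ⟨γ, by rw [(hρ γ).1 n x, hγ]⟩)
  U := Quot.mk _ '' B.U
  tau := Quot.lift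
    (fun x => if x ∈ B.U then Quot.mk _ (B.tau x) else Quot.mk _ x)
    (fun x y hxy => by
      obtain ⟨γ, hγ⟩ := hxy
      try dsimp only
      by_cases hx : x ∈ B.U
      · have hy : y ∈ B.U := hγ ▸ (hρ γ).2.1 x hx
        rw [if_pos hx, if_pos hy]
        exact Quot.sound ⟨γ, by rw [(hρ γ).2.2.1 x hx, hγ]⟩
      · have hy : y ∉ B.U := by
          intro hy
          apply hx
          have h1 : ρ γ⁻¹ y ∈ B.U := (hρ γ⁻¹).2.1 y hy
          have h2 : ρ γ⁻¹ y = x := by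
            rw [← hγ, ← Equiv.Perm.mul_apply, ← map_mul, inv_mul_cancel, map_one,
              Equiv.Perm.one_apply]
          rwa [h2] at h1
        rw [if_neg hx, if_neg hy]
        exact Quot.sound ⟨γ, hγ⟩)
  d := Quot.lift B.d
    (fun x y hxy => by
      obtain ⟨γ, hγ⟩ := hxy
      rw [← hγ, (hρ γ).2.2.2 x])

open Classical in
/-- The double cover `Ê` of a Brauer `G`-set: two copies of `E`, with the
involution exchanging the copies at the fixed points of `τ`. -/
noncomputable def hatData (B : BrauerData) : BrauerData where
  E := B.E × Bool
  act := fun n p => (B.act n p.1, p.2)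
  U := {p | p.1 ∈ B.U}
  tau := fun p => if B.tau p.1 = p.1 then (p.1, !p.2) else (B.tau p.1, p.2)
  d := fun p => B.d p.1

section Restrict

variable (B : BrauerData) (hB : B.IsBrauer) (C : Set B.E)
  (hC : ∀ e : B.E, e ∈ C ↔ B.act (B.d e) e ∈ C)

open Classical in
/-- The first-return map forwards, on `E ∖ C`. -/
noncomputable def restrictFwd (x : {x : B.E // x ∉ C}) : {x : B.E // x ∉ C} :=
  have hex : ∃ N : ℕ, 0 < N ∧ B.act N x.1 ∉ C :=
    ⟨B.d x.1, hB.dpos x.1, fun hc => x.2 ((hC x.1).mpr hc)⟩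
  ⟨B.act (Nat.find hex) x.1, (Nat.find_spec hex).2⟩

open Classical in
/-- The first-return map backwards, on `E ∖ C`. -/
noncomputable def restrictBwd (x : {x : B.E // x ∉ C}) : {x : B.E // x ∉ C} :=
  have hex : ∃ N : ℕ, 0 < N ∧ B.act (-(N : ℤ)) x.1 ∉ C := by
    refine ⟨B.d x.1, hB.dpos x.1, fun hc => x.2 ?_⟩
    have h1 : B.act (B.d (B.act (-(B.d x.1 : ℤ)) x.1)) (B.act (-(B.d x.1 : ℤ)) x.1) ∈ C :=
      (hC _).mp hc
    rw [hB.d_act, ← hB.act_add] at h1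
    simpa [hB.act_zero] using h1
  ⟨B.act (-(Nat.find hex : ℤ)) x.1, (Nat.find_spec hex).2⟩

open Classical in
/-- The Brauer `G`-set structure on `E' = E ∖ C` (for `C ⊆ E ∖ U` stable under `σ`):
`g` acts by the first-return map, and the degree is corrected by the number of
deleted points passed. -/
noncomputable def restrictData (hCU : ∀ e ∈ C, e ∉ B.U) : BrauerData where
  E := {x : B.E // x ∉ C}
  act := fun n x =>
    if 0 ≤ n then (restrictFwd B hB C hC)^[n.toNat] x
    else (restrictBwd B hB C hC)^[(-n).toNat] x
  U := {x | x.1 ∈ B.U}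
  tau := fun x =>
    if h : x.1 ∈ B.U then ⟨B.tau x.1, fun hc => hCU _ hc (hB.tau_mem _ h)⟩ else x
  d := fun x => B.d x.1 - ((Finset.Ico 1 (B.d x.1)).filter fun i => B.act i x.1 ∈ C).card

end Restrict

section Lines

/-- The data of a doubly infinite walk. -/
structure Line (B : BrauerData) where
  pt : ℤ → B.E
  st : ℤ → Step

/-- The line condition: `pt i = (st i) (pt (i-1))`, and both endpoints of a
`τ`-step lie in `U`. -/
def Line.IsLine {B : BrauerData} (l : Line B) : Prop :=
  ∀ i : ℤ, (l.st i = Step.tau → l.pt (i - 1) ∈ B.U ∧ l.pt i ∈ B.U) ∧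
    l.pt i = B.stepFun (l.st i) (l.pt (i - 1))

/-- The `n`-th translate of a line. -/
def Line.translate {B : BrauerData} (l : Line B) (n : ℤ) : Line B :=
  ⟨fun i => l.pt (i + n), fun i => l.st (i + n)⟩

/-- The inverse of a step. -/
def Step.inv : Step → Step
  | Step.g => Step.ginv
  | Step.ginv => Step.g
  | Step.tau => Step.tau

/-- The inverse of a line. -/
def Line.inv {B : BrauerData} (l : Line B) : Line B :=
  ⟨fun i => l.pt (-i), fun i => (l.st (1 - i)).inv⟩

/-- A band: a periodic line of the alternating form
`⋯ τ g^{k_i} τ g^{-l_i} τ g^{k_{i+1}} ⋯` with `0 < k_i < d(e_i)`, `0 < l_i < d(h_i)`. -/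
def Line.IsBand {B : BrauerData} (l : Line B) : Prop :=
  l.IsLine ∧
  (∃ n : ℤ, 0 < n ∧ l.translate n = l) ∧
  (∃ i : ℤ, l.st i = Step.tau) ∧
  (∀ i : ℤ, l.st i = Step.tau → l.st (i + 1) ≠ Step.tau) ∧
  (∀ i : ℤ, l.st i = Step.g → l.st (i + 1) = Step.g ∨ l.st (i + 1) = Step.tau) ∧
  (∀ i : ℤ, l.st i = Step.ginv → l.st (i + 1) = Step.ginv ∨ l.st (i + 1) = Step.tau) ∧
  (∀ i : ℤ, l.st i = Step.g → l.st (i + 1) = Step.tau → l.st (i + 2) = Step.ginv) ∧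
  (∀ i : ℤ, l.st i = Step.ginv → l.st (i + 1) = Step.tau → l.st (i + 2) = Step.g) ∧
  (∀ (i : ℤ) (j : ℕ), l.st i = Step.tau → 0 < j →
    (∀ m : ℕ, 0 < m → m ≤ j → l.st (i + m) ≠ Step.tau) → j < B.d (l.pt i))

/-- One step of the equivalence relation on bands: translation or inversion. -/
def BandRel (B : BrauerData) (l₁ l₂ : Line B) : Prop :=
  (∃ n : ℤ, l₂ = l₁.translate n) ∨ l₂ = l₁.inv

/-- The set of equivalence classes of bands. -/
def BandClasses (B : BrauerData) : Type :=
  Quot (fun l₁ l₂ : {l : Line B // l.IsBand} => BandRel B l₁.1 l₂.1)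

end Lines

section Special

/-- Tail of a special walk: blocks `g^i` separated by single `τ`'s, with
`0 < i < d` for the inner blocks and `0 ≤ i < d` for the last block. -/
inductive SpecialTail (B : BrauerData) : B.E → List Step → Prop
  | last (e : B.E) (i : ℕ) (h : i < B.d e) :
      SpecialTail B e (List.replicate i Step.g)
  | cons (e : B.E) (i : ℕ) (h0 : 0 < i) (h : i < B.d e)
      (hU : B.act i e ∈ B.U) (hU' : B.tau (B.act i e) ∈ B.U) {l : List Step}
      (ht : SpecialTail B (B.tau (B.act i e)) l) :
      SpecialTail B e (List.replicate i Step.g ++ Step.tau :: l)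

/-- Special walks: `g^{i_k} τ g^{i_{k-1}} τ ⋯ τ g^{i_1} τ g^{i_0}` with
`0 ≤ i_0 < d(e_0)`, `0 ≤ i_k < d(e_k)` and `0 < i_l < d(e_l)` for `1 ≤ l ≤ k-1`. -/
inductive IsSpecial (B : BrauerData) : B.E → List Step → Prop
  | single (e : B.E) (i : ℕ) (h : i < B.d e) :
      IsSpecial B e (List.replicate i Step.g)
  | multi (e : B.E) (i : ℕ) (h : i < B.d e)
      (hU : B.act i e ∈ B.U) (hU' : B.tau (B.act i e) ∈ B.U) {l : List Step}
      (ht : SpecialTail B (B.tau (B.act i e)) l) :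
      IsSpecial B e (List.replicate i Step.g ++ Step.tau :: l)

end Special

end FB

namespace FB

section Aux
open BrauerData Function

variable {B : BrauerData}

theorem act_act (hB : B.IsBrauer) (m n : ℤ) (x : B.E) :
    B.act m (B.act n x) = B.act (m + n) x := (hB.act_add m n x).symm

theorem sigma_act (hB : B.IsBrauer) (n : ℤ) (x : B.E) :
    B.sigma (B.act n x) = B.act n (B.sigma x) := by
  unfold BrauerData.sigma
  rw [hB.d_act, act_act hB, act_act hB, add_comm]

theorem sigma_tau (hB : B.IsBrauer) (hU : B.U = Set.univ) (x : B.E) :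
    B.sigma (B.tau x) = B.tau (B.sigma x) :=
  (hB.tau_sigma x (by rw [hU]; trivial)).symm

theorem iter_sigma_act (hB : B.IsBrauer) (m : ℕ) (n : ℤ) (x : B.E) :
    B.sigma^[m] (B.act n x) = B.act n (B.sigma^[m] x) := by
  induction m generalizing x with
  | zero => rfl
  | succ k ih =>
    rw [Function.iterate_succ_apply, Function.iterate_succ_apply, sigma_act hB, ih]

theorem iter_sigma_tau (hB : B.IsBrauer) (hU : B.U = Set.univ) (m : ℕ) (x : B.E) :
    B.sigma^[m] (B.tau x) = B.tau (B.sigma^[m] x) := by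
  induction m generalizing x with
  | zero => rfl
  | succ k ih =>
    rw [Function.iterate_succ_apply, Function.iterate_succ_apply, sigma_tau hB hU, ih]

theorem tau_tau (hB : B.IsBrauer) (hU : B.U = Set.univ) (x : B.E) :
    B.tau (B.tau x) = x := hB.tau_invol x (by rw [hU]; trivial)

theorem isValid_of_univ (hU : B.U = Set.univ) (x : B.E) (l : List Step) :
    B.IsValid x l := by
  induction l generalizing x with
  | nil => trivial
  | cons s l ih => exact ⟨fun _ => by rw [hU]; exact ⟨trivial, trivial⟩, ih _⟩

theorem endpt_replicate_g (hB : B.IsBrauer) (m : ℕ) (x : B.E) :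
    B.endpt x (List.replicate m Step.g) = B.act (m : ℤ) x := by
  induction m generalizing x with
  | zero => simp [BrauerData.endpt, hB.act_zero]
  | succ k ih =>
    rw [List.replicate_succ]
    show B.endpt (B.stepFun Step.g x) _ = _
    rw [ih]
    show B.act k (B.act 1 x) = _
    rw [act_act hB]
    norm_cast

theorem endpt_replicate_ginv (hB : B.IsBrauer) (m : ℕ) (x : B.E) :
    B.endpt x (List.replicate m Step.ginv) = B.act (-(m : ℤ)) x := by
  induction m generalizing x with
  | zero => simp [BrauerData.endpt, hB.act_zero]
  | succ k ih =>
    rw [List.replicate_succ]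
    show B.endpt (B.stepFun Step.ginv x) _ = _
    rw [ih]
    show B.act (-(k:ℤ)) (B.act (-1) x) = _
    rw [act_act hB]
    congr 1
    push_cast
    ring

theorem endpt_gSteps (hB : B.IsBrauer) (n : ℤ) (x : B.E) :
    B.endpt x (gSteps n) = B.act n x := by
  unfold gSteps
  by_cases h : 0 ≤ n
  · rw [if_pos h, endpt_replicate_g hB, Int.toNat_of_nonneg h]
  · rw [if_neg h, endpt_replicate_ginv hB]
    congr 1
    omega

theorem sigma_iter_mul_r {r : ℕ} (hr : IsOrderOf B r) (m : ℕ) (x : B.E) :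
    B.sigma^[m * r] x = x := by
  induction m with
  | zero => simp
  | succ k ih => rw [Nat.succ_mul, Function.iterate_add_apply, hr.2.1, ih]

theorem fix_endpt (hB : B.IsBrauer) (hU : B.U = Set.univ) {m : ℕ} {x : B.E}
    (hx : B.sigma^[m] x = x) (l : List Step) :
    B.sigma^[m] (B.endpt x l) = B.endpt x l := by
  induction l generalizing x with
  | nil => exact hx
  | cons s l ih =>
    show B.sigma^[m] (B.endpt (B.stepFun s x) l) = _
    refine ih ?_
    cases s
    · show B.sigma^[m] (B.act 1 x) = B.act 1 x
      rw [iter_sigma_act hB, hx]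
    · show B.sigma^[m] (B.act (-1) x) = B.act (-1) x
      rw [iter_sigma_act hB, hx]
    · show B.sigma^[m] (B.tau x) = B.tau x
      rw [iter_sigma_tau hB hU, hx]

theorem fix_global (hB : B.IsBrauer) (hU : B.U = Set.univ) (hconn : B.Connected)
    {m : ℕ} {x : B.E} (hx : B.sigma^[m] x = x) (y : B.E) : B.sigma^[m] y = y := by
  obtain ⟨l, -, hl⟩ := hconn x y
  rw [← hl]
  exact fix_endpt hB hU hx l

theorem dvd_of_fix {r : ℕ} (hB : B.IsBrauer) (hU : B.U = Set.univ) (hconn : B.Connected)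
    (hr : IsOrderOf B r) {m : ℕ} {x : B.E} (hx : B.sigma^[m] x = x) : r ∣ m := by
  have hall : ∀ y, B.sigma^[m % r] y = y := by
    intro y
    have h1 : B.sigma^[m] y = y := fix_global hB hU hconn hx y
    have h2 : m = m % r + m / r * r := by rw [Nat.mod_add_div']
    rw [h2, Function.iterate_add_apply, sigma_iter_mul_r hr] at h1
    exact h1
  rcases Nat.eq_zero_or_pos (m % r) with h | h
  · exact Nat.dvd_of_mod_eq_zero h
  · have := hr.2.2 _ h hall
    have := Nat.mod_lt m hr.1
    omega

theorem iter_eq_of_cast_eq {r : ℕ} (hr : IsOrderOf B r) {a b : ℕ}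
    (h : (a : ZMod r) = (b : ZMod r)) (x : B.E) : B.sigma^[a] x = B.sigma^[b] x := by
  have hmod : a % r = b % r := (ZMod.natCast_eq_natCast_iff a b r).mp h
  have key : ∀ c : ℕ, B.sigma^[c] x = B.sigma^[c % r] x := by
    intro c
    conv_lhs => rw [show c = c % r + c / r * r by rw [Nat.mod_add_div'],
      Function.iterate_add_apply, sigma_iter_mul_r hr]
  rw [key a, key b, hmod]

theorem cast_eq_of_iter_eq {r : ℕ} (hB : B.IsBrauer) (hU : B.U = Set.univ)
    (hconn : B.Connected) (hr : IsOrderOf B r) {a b : ℕ} {x : B.E}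
    (h : B.sigma^[a] x = B.sigma^[b] x) : (a : ZMod r) = (b : ZMod r) := by
  have h1 : B.sigma^[b * (r - 1) + a] x = B.sigma^[b * (r-1) + b] x := by
    rw [Function.iterate_add_apply, Function.iterate_add_apply, h]
  have hrp : r - 1 + 1 = r := Nat.succ_pred_eq_of_pos hr.1
  have h2 : b * (r - 1) + b = b * r := by
    calc b * (r-1) + b = b * ((r-1)+1) := by ring
    _ = b * r := by rw [hrp]
  rw [h2, sigma_iter_mul_r hr] at h1
  have h3 : r ∣ b * (r - 1) + a := dvd_of_fix hB hU hconn hr h1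
  have h4 : ((b * (r-1) + a : ℕ) : ZMod r) = 0 := by
    rw [ZMod.natCast_eq_zero_iff]; exact h3
  push_cast at h4
  have h5 : ((r : ℕ) : ZMod r) = 0 := ZMod.natCast_self r
  have h6 : ((r - 1 : ℕ) : ZMod r) = (r : ZMod r) - 1 := by
    have := hr.1
    push_cast [Nat.cast_sub (by omega : 1 ≤ r)]
    ring
  rw [h6, h5] at h4
  linear_combination h4

theorem eqvgen_sigma {r : ℕ} (hr : IsOrderOf B r) {x y : B.E}
    (h : Relation.EqvGen (sigmaRel B) x y) : ∃ m : ℕ, B.sigma^[m] x = y := by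
  induction h with
  | rel a b hab => exact ⟨1, hab⟩
  | refl a => exact ⟨0, rfl⟩
  | symm a b _ ih =>
    obtain ⟨m, hm⟩ := ih
    refine ⟨m * (r - 1), ?_⟩
    rw [← hm, ← Function.iterate_add_apply]
    have hrp : r - 1 + 1 = r := Nat.succ_pred_eq_of_pos hr.1
    have h2 : m * (r - 1) + m = m * r := by
      calc m * (r-1) + m = m * ((r-1)+1) := by ring
      _ = m * r := by rw [hrp]
    rw [h2, sigma_iter_mul_r hr]
  | trans a b c _ _ ih1 ih2 =>
    obtain ⟨m, hm⟩ := ih1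
    obtain ⟨m', hm'⟩ := ih2
    exact ⟨m' + m, by rw [Function.iterate_add_apply, hm, hm']⟩

end Aux
section CoverSec
open BrauerData Function

/-- A connected finite f_ms-BG covering `B₀` with fibers the `σ`-orbits. -/
structure Cover (B₀ : BrauerData) (r : ℕ) where
  B : BrauerData
  hB : B.IsBrauer
  hU : B.U = Set.univ
  htau : ∀ e, B.tau e ≠ e
  hconn : B.Connected
  hr : IsOrderOf B r
  toFun : B.E → B₀.E
  hact : ∀ (n : ℤ) (x : B.E), toFun (B.act n x) = B₀.act n (toFun x)
  htauc : ∀ x, toFun (B.tau x) = B₀.tau (toFun x)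
  hd : ∀ x, B₀.d (toFun x) = B.d x
  hsurj : Function.Surjective toFun
  hfib : ∀ x y, toFun x = toFun y → ∃ m : ℕ, B.sigma^[m] x = y

namespace Cover

variable {B₀ : BrauerData} {r : ℕ} (C : Cover B₀ r)

/-- A section of the covering. -/
noncomputable def s (e : B₀.E) : C.B.E := Function.surjInv C.hsurj e

theorem s_spec (e : B₀.E) : C.toFun (C.s e) = e := Function.surjInv_eq C.hsurj e

theorem exists_nl (x : C.B.E) : ∃ m : ℕ, C.B.sigma^[m] (C.s (C.toFun x)) = x :=
  C.hfib _ _ (C.s_spec _)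

/-- Position of `x` in its fiber, as a natural number. -/
noncomputable def nl (x : C.B.E) : ℕ := Classical.choose (C.exists_nl x)

theorem nl_spec (x : C.B.E) : C.B.sigma^[C.nl x] (C.s (C.toFun x)) = x :=
  Classical.choose_spec (C.exists_nl x)

/-- Position of `x` in its fiber, in `ZMod r`. -/
noncomputable def lam (x : C.B.E) : ZMod r := (C.nl x : ZMod r)

theorem lam_unique {m : ℕ} {x : C.B.E} (h : C.B.sigma^[m] (C.s (C.toFun x)) = x) :
    (m : ZMod r) = C.lam x :=
  cast_eq_of_iter_eq C.hB C.hU C.hconn C.hr (h.trans (C.nl_spec x).symm)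

theorem fiber_inj {x y : C.B.E} (h1 : C.toFun x = C.toFun y) (h2 : C.lam x = C.lam y) :
    x = y := by
  rw [← C.nl_spec x, ← C.nl_spec y, h1]
  rw [iter_eq_of_cast_eq C.hr h2]

theorem exists_nt (e : B₀.E) :
    ∃ m : ℕ, C.B.sigma^[m] (C.s (B₀.act 1 e)) = C.B.act 1 (C.s e) := by
  refine C.hfib _ _ ?_
  rw [C.s_spec, C.hact, C.s_spec]

/-- Transition exponent along `g`, as a natural number. -/
noncomputable def nt (e : B₀.E) : ℕ := Classical.choose (C.exists_nt e)

theorem nt_spec (e : B₀.E) : C.B.sigma^[C.nt e] (C.s (B₀.act 1 e)) = C.B.act 1 (C.s e) :=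
  Classical.choose_spec (C.exists_nt e)

/-- Transition along `g`, in `ZMod r`. -/
noncomputable def t (e : B₀.E) : ZMod r := (C.nt e : ZMod r)

theorem exists_nu (e : B₀.E) :
    ∃ m : ℕ, C.B.sigma^[m] (C.s (B₀.tau e)) = C.B.tau (C.s e) := by
  refine C.hfib _ _ ?_
  rw [C.s_spec, C.htauc, C.s_spec]

/-- Transition exponent along `τ`, as a natural number. -/
noncomputable def nu (e : B₀.E) : ℕ := Classical.choose (C.exists_nu e)

theorem nu_spec (e : B₀.E) : C.B.sigma^[C.nu e] (C.s (B₀.tau e)) = C.B.tau (C.s e) :=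
  Classical.choose_spec (C.exists_nu e)

/-- Transition along `τ`, in `ZMod r`. -/
noncomputable def u (e : B₀.E) : ZMod r := (C.nu e : ZMod r)

theorem lam_act (x : C.B.E) :
    C.lam (C.B.act 1 x) = C.lam x + C.t (C.toFun x) := by
  have key : C.B.sigma^[C.nl x + C.nt (C.toFun x)] (C.s (C.toFun (C.B.act 1 x)))
      = C.B.act 1 x := by
    rw [C.hact, Function.iterate_add_apply, C.nt_spec, iter_sigma_act C.hB, C.nl_spec]
  have h := C.lam_unique key
  rw [← h]
  push_cast
  rfl

theorem lam_tau (x : C.B.E) :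
    C.lam (C.B.tau x) = C.lam x + C.u (C.toFun x) := by
  have key : C.B.sigma^[C.nl x + C.nu (C.toFun x)] (C.s (C.toFun (C.B.tau x)))
      = C.B.tau x := by
    rw [C.htauc, Function.iterate_add_apply, C.nu_spec, iter_sigma_tau C.hB C.hU,
      C.nl_spec]
  have h := C.lam_unique key
  rw [← h]
  push_cast
  rfl

theorem lam_actinv (x : C.B.E) :
    C.lam (C.B.act (-1) x) = C.lam x - C.t (C.toFun (C.B.act (-1) x)) := by
  have h := C.lam_act (C.B.act (-1) x)
  rw [act_act C.hB] at h
  norm_num [C.hB.act_zero] at h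
  rw [h]
  ring

theorem toFun_endpt (x : C.B.E) (l : List Step) :
    C.toFun (C.B.endpt x l) = B₀.endpt (C.toFun x) l := by
  induction l generalizing x with
  | nil => rfl
  | cons st l ih =>
    show C.toFun (C.B.endpt (C.B.stepFun st x) l) = B₀.endpt (B₀.stepFun st (C.toFun x)) l
    rw [ih]
    congr 1
    cases st
    · exact C.hact 1 x
    · exact C.hact (-1) x
    · exact C.htauc x

theorem d_s (e : B₀.E) : C.B.d (C.s e) = B₀.d e := by
  rw [← C.hd, C.s_spec]

/-- The sum of the `g`-transitions around a vertex is `1`. -/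
theorem t_sum (hB₀ : B₀.IsBrauer) (hdeg1 : ∀ e : B₀.E, B₀.act (B₀.d e) e = e ∧
      ∀ j : ℕ, 0 < j → B₀.act j e = e → B₀.d e ≤ j) (e : B₀.E) :
    ∑ j ∈ Finset.range (B₀.d e), C.t (B₀.act (j : ℤ) e) = 1 := by
  have claim : ∀ m : ℕ, C.B.sigma^[∑ j ∈ Finset.range m, C.nt (B₀.act (j : ℤ) e)]
      (C.s (B₀.act (m : ℤ) e)) = C.B.act (m : ℤ) (C.s e) := by
    intro m
    induction m with
    | zero => simp [hB₀.act_zero, C.hB.act_zero]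
    | succ k ih =>
      rw [Finset.sum_range_succ]
      have h1 : B₀.act ((k+1 : ℕ) : ℤ) e = B₀.act 1 (B₀.act (k : ℤ) e) := by
        rw [act_act hB₀]
        congr 1
        push_cast
        ring
      have h2 : C.B.act ((k+1 : ℕ) : ℤ) (C.s e) = C.B.act 1 (C.B.act (k : ℤ) (C.s e)) := by
        rw [act_act C.hB]
        congr 1
        push_cast
        ring
      rw [h1, h2, Function.iterate_add_apply, C.nt_spec, iter_sigma_act C.hB, ih]
  have h3 := claim (B₀.d e)
  rw [(hdeg1 e).1] at h3
  have h4 : C.B.act ((B₀.d e : ℕ) : ℤ) (C.s e) = C.B.sigma^[1] (C.s e) := by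
    show _ = C.B.sigma (C.s e)
    unfold BrauerData.sigma
    rw [C.d_s]
  rw [h4] at h3
  have h5 := cast_eq_of_iter_eq C.hB C.hU C.hconn C.hr h3
  show ∑ j ∈ Finset.range (B₀.d e), ((C.nt (B₀.act (j : ℤ) e) : ZMod r)) = 1
  push_cast at h5
  exact h5

theorem u_add (hB₀ : B₀.IsBrauer) (hU₀ : B₀.U = Set.univ) (e : B₀.E) :
    C.u e + C.u (B₀.tau e) = 0 := by
  have k1 := C.nu_spec (B₀.tau e)
  rw [tau_tau hB₀ hU₀] at k1
  have key : C.B.sigma^[C.nu e + C.nu (B₀.tau e)] (C.s e) = C.B.sigma^[0] (C.s e) := by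
    rw [Function.iterate_add_apply, k1, iter_sigma_tau C.hB C.hU, C.nu_spec,
      tau_tau C.hB C.hU]
    rfl
  have h1 : ((C.nu e + C.nu (B₀.tau e) : ℕ) : ZMod r) = ((0 : ℕ) : ZMod r) :=
    cast_eq_of_iter_eq C.hB C.hU C.hconn C.hr key
  push_cast at h1
  exact h1

theorem u_ne_zero {e : B₀.E} (he : B₀.tau e = e) : C.u e ≠ 0 := by
  intro h0
  have h1 : C.B.sigma^[C.nu e] (C.s e) = C.B.sigma^[0] (C.s e) :=
    iter_eq_of_cast_eq C.hr (by rw [Nat.cast_zero]; exact h0) (C.s e)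
  have h2 := C.nu_spec e
  rw [he] at h2
  rw [h1] at h2
  exact C.htau (C.s e) h2.symm

end Cover
end CoverSec
section Counting
open BrauerData Function

theorem vmk_act_nat {B₀ : BrauerData} (hB₀ : B₀.IsBrauer) (m : ℕ) (e : B₀.E) :
    Quot.mk (vertexRel B₀) (B₀.act (m : ℤ) e) = Quot.mk (vertexRel B₀) e := by
  induction m with
  | zero =>
    rw [show ((0:ℕ) : ℤ) = 0 by rfl, hB₀.act_zero]
  | succ j ih =>
    have h1 : B₀.act ((j+1 : ℕ) : ℤ) e = B₀.act 1 (B₀.act (j : ℤ) e) := by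
      rw [act_act hB₀]; congr 1; push_cast; ring
    rw [h1, ← ih]
    exact (Quot.sound
      (show vertexRel B₀ (B₀.act (j:ℤ) e) (B₀.act 1 (B₀.act (j:ℤ) e)) from rfl)).symm

theorem edge_eqvgen {B₀ : BrauerData} (hB₀ : B₀.IsBrauer) (hU₀ : B₀.U = Set.univ)
    {a b : {e : B₀.E // e ∈ B₀.U ∧ B₀.tau e ≠ e}}
    (h2 : Relation.EqvGen (fun a b : {e : B₀.E // e ∈ B₀.U ∧ B₀.tau e ≠ e} =>
      B₀.tau a.1 = b.1) a b) : a = b ∨ B₀.tau a.1 = b.1 := by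
  induction h2 with
  | rel x y hxy => exact Or.inr hxy
  | refl x => exact Or.inl rfl
  | symm x y _ ih =>
    rcases ih with h | h
    · exact Or.inl h.symm
    · refine Or.inr ?_
      rw [← h, tau_tau hB₀ hU₀]
  | trans x y z _ _ ih1 ih2 =>
    rcases ih1 with h1 | h1 <;> rcases ih2 with h2 | h2
    · exact Or.inl (h1.trans h2)
    · exact Or.inr (by rw [h1]; exact h2)
    · exact Or.inr (by rw [← h2]; exact h1)
    · refine Or.inl (Subtype.ext ?_)
      rw [← h2, ← h1, tau_tau hB₀ hU₀]

theorem edge_rel_cases {B₀ : BrauerData} (hB₀ : B₀.IsBrauer) (hU₀ : B₀.U = Set.univ)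
    {a b : {e : B₀.E // e ∈ B₀.U ∧ B₀.tau e ≠ e}}
    (h : Quot.mk (fun a b : {e : B₀.E // e ∈ B₀.U ∧ B₀.tau e ≠ e} => B₀.tau a.1 = b.1) a
       = Quot.mk _ b) : a = b ∨ B₀.tau a.1 = b.1 :=
  edge_eqvgen hB₀ hU₀ (Quot.eq.mp h)

/-- The map sending a potential to its `g`- and `τ`-gradients. -/
noncomputable def theta (B₀ : BrauerData) (r : ℕ) :
    (B₀.E → ZMod r) →+ (B₀.E → ZMod r) × (B₀.E → ZMod r) :=
  AddMonoidHom.mk' (fun μ => (fun e => μ (B₀.act 1 e) - μ e, fun e => μ (B₀.tau e) - μ e))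
    (by
      intro a b
      refine Prod.ext (funext fun e => ?_) (funext fun e => ?_) <;>
        simp only [Prod.fst, Prod.snd, Pi.add_apply, Prod.fst_add, Prod.snd_add] <;> ring)

theorem theta_fst {B₀ : BrauerData} {r : ℕ} (μ : B₀.E → ZMod r) (e : B₀.E) :
    (theta B₀ r μ).1 e = μ (B₀.act 1 e) - μ e := rfl

theorem theta_snd {B₀ : BrauerData} {r : ℕ} (μ : B₀.E → ZMod r) (e : B₀.E) :
    (theta B₀ r μ).2 e = μ (B₀.tau e) - μ e := rfl

/-- The subgroup of compatible gradient pairs. -/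
noncomputable def targ (B₀ : BrauerData) (r : ℕ) :
    AddSubgroup ((B₀.E → ZMod r) × (B₀.E → ZMod r)) where
  carrier := {p | (∀ e, ∑ j ∈ Finset.range (B₀.d e), p.1 (B₀.act (j : ℤ) e) = 0) ∧
    (∀ e, p.2 (B₀.tau e) = - p.2 e) ∧ (∀ e, B₀.tau e = e → p.2 e = 0)}
  zero_mem' := by
    refine ⟨fun e => by simp, fun e => by simp, fun e _ => rfl⟩
  add_mem' := by
    rintro p q ⟨hp1, hp2, hp3⟩ ⟨hq1, hq2, hq3⟩
    refine ⟨fun e => ?_, fun e => ?_, fun e he => ?_⟩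
    · show ∑ j ∈ Finset.range (B₀.d e), (p.1 (B₀.act (j:ℤ) e) + q.1 (B₀.act (j:ℤ) e)) = 0
      rw [Finset.sum_add_distrib, hp1 e, hq1 e, add_zero]
    · show p.2 (B₀.tau e) + q.2 (B₀.tau e) = -(p.2 e + q.2 e)
      rw [hp2 e, hq2 e]; ring
    · show p.2 e + q.2 e = 0
      rw [hp3 e he, hq3 e he, add_zero]
  neg_mem' := by
    rintro p ⟨hp1, hp2, hp3⟩
    refine ⟨fun e => ?_, fun e => ?_, fun e he => ?_⟩
    · show ∑ j ∈ Finset.range (B₀.d e), (-(p.1 (B₀.act (j:ℤ) e))) = 0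
      rw [Finset.sum_neg_distrib, hp1 e, neg_zero]
    · show -(p.2 (B₀.tau e)) = -(-(p.2 e))
      rw [hp2 e]
    · show -(p.2 e) = 0
      rw [hp3 e he, neg_zero]

theorem range_le_targ {B₀ : BrauerData} (hB₀ : B₀.IsBrauer) (hU₀ : B₀.U = Set.univ)
    (hdeg1 : ∀ e : B₀.E, B₀.act (B₀.d e) e = e ∧
      ∀ j : ℕ, 0 < j → B₀.act j e = e → B₀.d e ≤ j) (r : ℕ) :
    AddMonoidHom.range (theta B₀ r) ≤ targ B₀ r := by
  rintro p ⟨μ, rfl⟩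
  refine ⟨fun e => ?_, fun e => ?_, fun e he => ?_⟩
  · have hcongr : ∀ j ∈ Finset.range (B₀.d e),
        (theta B₀ r μ).1 (B₀.act (j:ℤ) e)
          = (fun i : ℕ => μ (B₀.act (i : ℤ) e)) (j+1) - (fun i : ℕ => μ (B₀.act (i:ℤ) e)) j := by
      intro j _
      show μ (B₀.act 1 (B₀.act (j:ℤ) e)) - μ (B₀.act (j:ℤ) e)
        = μ (B₀.act ((j+1:ℕ):ℤ) e) - μ (B₀.act ((j:ℕ):ℤ) e)
      have hstep : B₀.act 1 (B₀.act (j:ℤ) e) = B₀.act ((j+1:ℕ):ℤ) e := by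
        rw [act_act hB₀]; congr 1; push_cast; ring
      rw [hstep]
    rw [Finset.sum_congr rfl hcongr, Finset.sum_range_sub (fun i : ℕ => μ (B₀.act (i:ℤ) e))]
    show μ (B₀.act ((B₀.d e : ℕ) : ℤ) e) - μ (B₀.act ((0:ℕ):ℤ) e) = 0
    rw [(hdeg1 e).1, show ((0:ℕ):ℤ) = 0 from rfl, hB₀.act_zero, sub_self]
  · show μ (B₀.tau (B₀.tau e)) - μ (B₀.tau e) = -(μ (B₀.tau e) - μ e)
    rw [tau_tau hB₀ hU₀]
    ring
  · show μ (B₀.tau e) - μ e = 0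
    rw [he, sub_self]

theorem ker_card_le {B₀ : BrauerData} (hB₀ : B₀.IsBrauer)
    (hne₀ : Nonempty B₀.E)
    (hconn₀ : ∀ e e' : B₀.E, ∃ l : List Step, B₀.endpt e l = e') (r : ℕ) [NeZero r] :
    Nat.card (AddMonoidHom.ker (theta B₀ r)) ≤ r := by
  haveI := hne₀
  have hinj : Function.Injective
      (fun μ : AddMonoidHom.ker (theta B₀ r) => μ.1 (Classical.arbitrary B₀.E)) := by
    rintro ⟨μ, hμ⟩ ⟨ν, hν⟩ h
    simp only at h
    rw [AddMonoidHom.mem_ker] at hμ hν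
    have hμ1 : ∀ e, μ (B₀.act 1 e) = μ e := fun e => sub_eq_zero.mp
      (by rw [← theta_fst μ e, hμ]; rfl)
    have hμ2 : ∀ e, μ (B₀.tau e) = μ e := fun e => sub_eq_zero.mp
      (by rw [← theta_snd μ e, hμ]; rfl)
    have hν1 : ∀ e, ν (B₀.act 1 e) = ν e := fun e => sub_eq_zero.mp
      (by rw [← theta_fst ν e, hν]; rfl)
    have hν2 : ∀ e, ν (B₀.tau e) = ν e := fun e => sub_eq_zero.mp
      (by rw [← theta_snd ν e, hν]; rfl)
    have const : ∀ (ρ : B₀.E → ZMod r), (∀ e, ρ (B₀.act 1 e) = ρ e) →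
        (∀ e, ρ (B₀.tau e) = ρ e) → ∀ (l : List Step) (e : B₀.E), ρ (B₀.endpt e l) = ρ e := by
      intro ρ h1 h2 l
      induction l with
      | nil => intro e; rfl
      | cons st l ih =>
        intro e
        show ρ (B₀.endpt (B₀.stepFun st e) l) = ρ e
        rw [ih]
        cases st
        · exact h1 e
        · show ρ (B₀.act (-1) e) = ρ e
          rw [← h1 (B₀.act (-1) e), act_act hB₀]
          norm_num [hB₀.act_zero]
        · exact h2 e
    refine Subtype.ext (funext fun e => ?_)
    obtain ⟨l, hl⟩ := hconn₀ (Classical.arbitrary B₀.E) e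
    show μ e = ν e
    rw [← hl, const μ hμ1 hμ2, const ν hν1 hν2, h]
  calc Nat.card (AddMonoidHom.ker (theta B₀ r))
      ≤ Nat.card (ZMod r) := Nat.card_le_card_of_injective _ hinj
    _ = r := Nat.card_zmod r

end Counting
section Solve
open BrauerData Function

theorem solve_potential {B₀ : BrauerData} (hB₀ : B₀.IsBrauer) (hU₀ : B₀.U = Set.univ)
    (hdeg1 : ∀ e : B₀.E, B₀.act (B₀.d e) e = e ∧
      ∀ j : ℕ, 0 < j → B₀.act j e = e → B₀.d e ≤ j)
    (hfin₀ : Finite B₀.E) (hne₀ : Nonempty B₀.E)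
    (hconn₀ : ∀ e e' : B₀.E, ∃ l : List Step, B₀.endpt e l = e')
    (r k n : ℕ) [NeZero r] (hkn : n = k + 1)
    (hvert : Nat.card (VertexQuot B₀) = n) (hedge : Nat.card (EdgeQuot B₀) = k)
    (A W : B₀.E → ZMod r)
    (hA : ∀ e, ∑ j ∈ Finset.range (B₀.d e), A (B₀.act (j:ℤ) e) = 0)
    (hW1 : ∀ e, W (B₀.tau e) = - W e)
    (hW2 : ∀ e, B₀.tau e = e → W e = 0) :
    ∃ μ : B₀.E → ZMod r,
      (∀ e, μ (B₀.act 1 e) - μ e = A e) ∧ (∀ e, μ (B₀.tau e) - μ e = W e) := by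
  classical
  haveI := hfin₀
  haveI := hne₀
  haveI : Finite (VertexQuot B₀) :=
    Finite.of_surjective (Quot.mk (vertexRel B₀)) Quot.mk_surjective
  haveI : Finite {e : B₀.E // e ∈ B₀.U ∧ B₀.tau e ≠ e} := Subtype.finite
  haveI : Finite (EdgeQuot B₀) := Finite.of_surjective
    (Quot.mk (fun a b : {e : B₀.E // e ∈ B₀.U ∧ B₀.tau e ≠ e} => B₀.tau a.1 = b.1))
    Quot.mk_surjective
  have hrpos : 0 < r := Nat.pos_of_ne_zero (NeZero.ne r)
  -- sections of the vertex and edge quotients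
  set vs : VertexQuot B₀ → B₀.E := fun q => Classical.choose (Quot.exists_rep q) with hvsdef
  have hvs : ∀ q, Quot.mk (vertexRel B₀) (vs q) = q :=
    fun q => Classical.choose_spec (Quot.exists_rep q)
  set es : EdgeQuot B₀ → {e : B₀.E // e ∈ B₀.U ∧ B₀.tau e ≠ e} :=
    fun q => Classical.choose (Quot.exists_rep q) with hesdef
  have hes : ∀ q, Quot.mk _ (es q) = q := fun q => Classical.choose_spec (Quot.exists_rep q)
  -- the counting injection
  set J : (targ B₀ r) × (VertexQuot B₀ → ZMod r) →
      (B₀.E → ZMod r) × (EdgeQuot B₀ → ZMod r) := fun p =>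
    (fun e => if vs (Quot.mk (vertexRel B₀) e) = e then p.2 (Quot.mk (vertexRel B₀) e)
      else (p.1 : (B₀.E → ZMod r) × (B₀.E → ZMod r)).1 e,
     fun q => (p.1 : (B₀.E → ZMod r) × (B₀.E → ZMod r)).2 (es q).1) with hJdef
  have hJ : Function.Injective J := by
    intro p p' h
    have h1 := congrArg Prod.fst h
    have h2 := congrArg Prod.snd h
    obtain ⟨⟨⟨A1, W1⟩, hT1⟩, γ⟩ := p
    obtain ⟨⟨⟨A1', W1'⟩, hT1'⟩, γ'⟩ := p'
    have hTA : ∀ e, ∑ j ∈ Finset.range (B₀.d e), A1 (B₀.act (j:ℤ) e) = 0 := hT1.1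
    have hTW : ∀ e, W1 (B₀.tau e) = - W1 e := hT1.2.1
    have hTW2 : ∀ e, B₀.tau e = e → W1 e = 0 := hT1.2.2
    have hTA' : ∀ e, ∑ j ∈ Finset.range (B₀.d e), A1' (B₀.act (j:ℤ) e) = 0 := hT1'.1
    have hTW' : ∀ e, W1' (B₀.tau e) = - W1' e := hT1'.2.1
    have hTW2' : ∀ e, B₀.tau e = e → W1' e = 0 := hT1'.2.2
    have h1 : ∀ e, (if vs (Quot.mk (vertexRel B₀) e) = e
        then γ (Quot.mk (vertexRel B₀) e) else A1 e)
        = (if vs (Quot.mk (vertexRel B₀) e) = e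
        then γ' (Quot.mk (vertexRel B₀) e) else A1' e) := fun e => congrFun h1 e
    have h2 : ∀ q, W1 (es q).1 = W1' (es q).1 := fun q => congrFun h2 q
    -- the vertex constants agree
    have hγ : γ = γ' := by
      funext q
      have hc := h1 (vs q)
      rw [hvs q] at hc
      rw [if_pos rfl, if_pos rfl] at hc
      exact hc
    -- the `g`-gradients agree off the chosen representatives
    have hAoff : ∀ e, vs (Quot.mk (vertexRel B₀) e) ≠ e → A1 e = A1' e := by
      intro e hne
      have hc := h1 e
      rw [if_neg hne, if_neg hne] at hc
      exact hc
    have hAeq : A1 = A1' := by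
      funext e
      by_cases hrep : vs (Quot.mk (vertexRel B₀) e) = e
      · -- representative: recover the value from the vertex sum
        have hd := hB₀.dpos e
        have hs1 := hTA e
        have hs1' := hTA' e
        rw [show B₀.d e = (B₀.d e - 1) + 1 by omega] at hs1 hs1'
        rw [Finset.sum_range_succ'] at hs1 hs1'
        have hterm : ∀ j ∈ Finset.range (B₀.d e - 1),
            A1 (B₀.act ((j+1 : ℕ) : ℤ) e) = A1' (B₀.act ((j+1 : ℕ) : ℤ) e) := by
          intro j hj
          rw [Finset.mem_range] at hj
          refine hAoff _ ?_
          rw [vmk_act_nat hB₀ (j+1) e, hrep]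
          intro heq
          have heq2 : B₀.act ((j+1 : ℕ) : ℤ) e = e := heq.symm
          have := (hdeg1 e).2 (j+1) (by omega) heq2
          omega
        rw [Finset.sum_congr rfl hterm] at hs1
        have h0 : B₀.act ((0:ℕ) : ℤ) e = e := by
          rw [show ((0:ℕ):ℤ) = 0 from rfl, hB₀.act_zero]
        rw [h0] at hs1 hs1'
        have heq := hs1.trans hs1'.symm
        exact add_left_cancel heq
      · exact hAoff e hrep
    -- the `τ`-gradients agree
    have hWeq : W1 = W1' := by
      funext e
      by_cases hfix : B₀.tau e = e
      · rw [hTW2 e hfix, hTW2' e hfix]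
      · have he : e ∈ B₀.U := by rw [hU₀]; trivial
        have hq := h2 (Quot.mk _ (⟨e, he, hfix⟩ : {e : B₀.E // e ∈ B₀.U ∧ B₀.tau e ≠ e}))
        set q := Quot.mk (fun a b : {e : B₀.E // e ∈ B₀.U ∧ B₀.tau e ≠ e} =>
          B₀.tau a.1 = b.1) ⟨e, he, hfix⟩ with hqdef
        have hcases := edge_rel_cases hB₀ hU₀
          (a := es q) (b := ⟨e, he, hfix⟩) ((hes q).trans hqdef.symm)
        rcases hcases with hcase | hcase
        · rw [hcase] at hq
          exact hq
        · have hcase' : B₀.tau (es q).1 = e := hcase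
          have hee : B₀.tau e = (es q).1 := by
            rw [← hcase', tau_tau hB₀ hU₀]
          have k1 : W1 (B₀.tau e) = - W1 e := hTW e
          have k1' : W1' (B₀.tau e) = - W1' e := hTW' e
          rw [hee] at k1 k1'
          exact neg_injective (k1.symm.trans (hq.trans k1'))
    exact Prod.ext (Subtype.ext (Prod.ext hAeq hWeq)) hγ
  -- cardinality bookkeeping
  set c := Nat.card B₀.E with hcdef
  have hc1 : 1 ≤ c := Nat.card_pos
  have hcard_fun : Nat.card (B₀.E → ZMod r) = r ^ c := by
    rw [Nat.card_fun, Nat.card_zmod]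
  have hker_le := ker_card_le hB₀ hne₀ hconn₀ r
  have hquot := AddSubgroup.card_eq_card_quotient_mul_card_addSubgroup
    (AddMonoidHom.ker (theta B₀ r))
  have hqr : Nat.card ((B₀.E → ZMod r) ⧸ AddMonoidHom.ker (theta B₀ r))
      = Nat.card (AddMonoidHom.range (theta B₀ r)) :=
    Nat.card_congr (QuotientAddGroup.quotientKerEquivRange (theta B₀ r)).toEquiv
  have hrange_ge : r ^ (c - 1) ≤ Nat.card (AddMonoidHom.range (theta B₀ r)) := by
    rw [hcard_fun, hqr] at hquot
    have : r ^ c ≤ Nat.card (AddMonoidHom.range (theta B₀ r)) * r := by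
      calc r ^ c = Nat.card (AddMonoidHom.range (theta B₀ r))
          * Nat.card (AddMonoidHom.ker (theta B₀ r)) := hquot
        _ ≤ _ := Nat.mul_le_mul_left _ hker_le
    have hpow : r ^ c = r ^ (c - 1) * r := by
      rw [← pow_succ]
      congr 1
      omega
    rw [hpow] at this
    exact Nat.le_of_mul_le_mul_right this hrpos
  have htarg_le : Nat.card (targ B₀ r) ≤ r ^ (c - 1) := by
    have hle := Nat.card_le_card_of_injective J hJ
    simp only [Nat.card_prod, Nat.card_fun, Nat.card_zmod, hvert, hedge] at hle
    rw [show Nat.card B₀.E = c from rfl] at hle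
    have hpow : r ^ c * r ^ k = r ^ (c - 1) * r ^ n := by
      rw [← pow_add, ← pow_add]
      congr 1
      omega
    rw [hpow] at hle
    exact Nat.le_of_mul_le_mul_right hle (pow_pos hrpos n)
  have hrange_eq : AddMonoidHom.range (theta B₀ r) = targ B₀ r := by
    refine AddSubgroup.eq_of_le_of_card_ge (range_le_targ hB₀ hU₀ hdeg1 r) ?_
    exact le_trans htarg_le hrange_ge
  have hmem : (A, W) ∈ targ B₀ r := ⟨hA, hW1, hW2⟩
  rw [← hrange_eq] at hmem
  obtain ⟨μ, hμ⟩ := hmem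
  refine ⟨μ, fun e => ?_, fun e => ?_⟩
  · have := congrFun (congrArg Prod.fst hμ) e
    exact this
  · have := congrFun (congrArg Prod.snd hμ) e
    exact this

end Solve
section Main
open BrauerData Function

/-- Uniqueness of the element of order 2 in `ZMod r`. -/
theorem zmod_two_torsion (r : ℕ) [NeZero r] {a b : ZMod r}
    (ha : a + a = 0) (hb : b + b = 0) (ha0 : a ≠ 0) (hb0 : b ≠ 0) : a = b := by
  have hva : ((a.val + a.val : ℕ) : ZMod r) = 0 := by
    push_cast
    rw [ZMod.natCast_rightInverse a]
    exact ha
  have hvb : ((b.val + b.val : ℕ) : ZMod r) = 0 := by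
    push_cast
    rw [ZMod.natCast_rightInverse b]
    exact hb
  rw [ZMod.natCast_eq_zero_iff] at hva hvb
  have hla := ZMod.val_lt a
  have hlb := ZMod.val_lt b
  have h0a : a.val ≠ 0 := fun h => ha0 ((ZMod.val_eq_zero a).mp h)
  have h0b : b.val ≠ 0 := fun h => hb0 ((ZMod.val_eq_zero b).mp h)
  have hveq : a.val = b.val := by
    obtain ⟨ca, hca⟩ := hva
    obtain ⟨cb, hcb⟩ := hvb
    have hca1 : ca = 1 := by nlinarith [Nat.pos_of_ne_zero h0a]
    have hcb1 : cb = 1 := by nlinarith [Nat.pos_of_ne_zero h0b]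
    rw [hca1, mul_one] at hca
    rw [hcb1, mul_one] at hcb
    omega
  calc a = ((a.val : ℕ) : ZMod r) := (ZMod.natCast_rightInverse a).symm
    _ = ((b.val : ℕ) : ZMod r) := by rw [hveq]
    _ = b := ZMod.natCast_rightInverse b

/-- Construct a covering from an isomorphism with the `σ`-quotient. -/
theorem mk_cover (B : BrauerData) (hB : B.IsBrauer) (hU : B.U = Set.univ)
    (htau : ∀ e, B.tau e ≠ e) (hconn : B.Connected) (r : ℕ) (hr : IsOrderOf B r)
    (B₀ : BrauerData) (hiso : IsIsoBrauer (sigmaQuot B hB hU) B₀) :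
    ∃ C : Cover B₀ r, C.B = B := by
  obtain ⟨f, g, hf, hg, hgf, hfg⟩ := hiso
  refine ⟨⟨B, hB, hU, htau, hconn, hr, fun x => f (Quot.mk _ x), ?_, ?_, ?_, ?_, ?_⟩, rfl⟩
  · intro n x
    show f (Quot.mk (sigmaRel B) (B.act n x)) = B₀.act n (f (Quot.mk (sigmaRel B) x))
    have h1 : (Quot.mk (sigmaRel B) (B.act n x))
        = (sigmaQuot B hB hU).act n (Quot.mk (sigmaRel B) x) := rfl
    rw [h1]
    exact hf.1 n _
  · intro x
    show f (Quot.mk (sigmaRel B) (B.tau x)) = B₀.tau (f (Quot.mk (sigmaRel B) x))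
    have h1 : (Quot.mk (sigmaRel B) (B.tau x))
        = (sigmaQuot B hB hU).tau (Quot.mk (sigmaRel B) x) := rfl
    rw [h1]
    exact hf.2.2.1 _ ⟨x, by rw [hU]; trivial, rfl⟩
  · intro x
    exact hf.2.2.2 (Quot.mk _ x)
  · intro y
    obtain ⟨x, hx⟩ := Quot.exists_rep (g y)
    refine ⟨x, ?_⟩
    show f (Quot.mk (sigmaRel B) x) = y
    rw [hx, hfg]
  · intro x y hxy
    have h1 : Quot.mk (sigmaRel B) x = Quot.mk (sigmaRel B) y := by
      have h2 := congrArg g hxy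
      exact (hgf _).symm.trans (h2.trans (hgf _))
    exact eqvgen_sigma hr (Quot.eq.mp h1)

/-- The weighted sum of step-increments along a walk. -/
def SDelta (B₀ : BrauerData) {r : ℕ} (D : Step → B₀.E → ZMod r) :
    B₀.E → List Step → ZMod r
  | _, [] => 0
  | e, s :: l => D s e + SDelta B₀ D (B₀.stepFun s e) l

theorem psi_sum {B₀ : BrauerData} {r : ℕ} {B : BrauerData} (p : B.E → B₀.E)
    (hp : ∀ (s : Step) (x : B.E), p (B.stepFun s x) = B₀.stepFun s (p x))
    (Ψ : B.E → ZMod r) (D : Step → B₀.E → ZMod r)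
    (hinc : ∀ (s : Step) (x : B.E), Ψ (B.stepFun s x) = Ψ x + D s (p x)) :
    ∀ (l : List Step) (x : B.E), Ψ (B.endpt x l) = Ψ x + SDelta B₀ D (p x) l := by
  intro l
  induction l with
  | nil => intro x; simp [BrauerData.endpt, SDelta]
  | cons s l ih =>
    intro x
    show Ψ (B.endpt (B.stepFun s x) l) = _
    rw [ih, hinc, hp]
    show _ = Ψ x + (D s (p x) + SDelta B₀ D (B₀.stepFun s (p x)) l)
    ring

theorem cover_step_commute {B₀ : BrauerData} {r : ℕ} (C : Cover B₀ r)
    (s : Step) (x : C.B.E) : C.toFun (C.B.stepFun s x) = B₀.stepFun s (C.toFun x) := by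
  cases s
  · exact C.hact 1 x
  · exact C.hact (-1) x
  · exact C.htauc x

/-- Existence of a walk-compatible map between two covers, given a potential `μ`. -/
theorem exists_halfmap {B₀ : BrauerData} (hB₀ : B₀.IsBrauer) {r : ℕ} (C C' : Cover B₀ r)
    (μ : B₀.E → ZMod r)
    (hμ1 : ∀ e, μ (B₀.act 1 e) - μ e = C.t e - C'.t e)
    (hμ2 : ∀ e, μ (B₀.tau e) - μ e = C.u e - C'.u e)
    (x₀ : C.B.E) (y₀ : C'.B.E) (hxy : C.toFun x₀ = C'.toFun y₀) :
    ∃ F : C.B.E → C'.B.E,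
      ∀ (x : C.B.E) (l : List Step), C.B.endpt x₀ l = x → F x = C'.B.endpt y₀ l := by
  set D : Step → B₀.E → ZMod r := fun s e =>
    match s with
    | Step.g => C.t e
    | Step.ginv => - C.t (B₀.act (-1) e)
    | Step.tau => C.u e with hD
  have hinc : ∀ (s : Step) (x : C.B.E),
      C.lam (C.B.stepFun s x) = C.lam x + D s (C.toFun x) := by
    intro s x
    cases s
    · exact C.lam_act x
    · show C.lam (C.B.act (-1) x) = _
      rw [C.lam_actinv, C.hact]
      show _ = C.lam x + - C.t (B₀.act (-1) (C.toFun x))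
      ring
    · exact C.lam_tau x
  have hinc' : ∀ (s : Step) (y : C'.B.E),
      (C'.lam (C'.B.stepFun s y) + μ (C'.toFun (C'.B.stepFun s y)))
        = (C'.lam y + μ (C'.toFun y)) + D s (C'.toFun y) := by
    intro s y
    cases s
    · show C'.lam (C'.B.act 1 y) + μ (C'.toFun (C'.B.act 1 y)) = _
      rw [C'.lam_act, C'.hact]
      have h := hμ1 (C'.toFun y)
      show C'.lam y + C'.t (C'.toFun y) + μ (B₀.act 1 (C'.toFun y))
        = C'.lam y + μ (C'.toFun y) + C.t (C'.toFun y)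
      linear_combination h
    · show C'.lam (C'.B.act (-1) y) + μ (C'.toFun (C'.B.act (-1) y)) = _
      rw [C'.lam_actinv, C'.hact]
      have hact1 : B₀.act 1 (B₀.act (-1) (C'.toFun y)) = C'.toFun y := by
        rw [act_act hB₀]
        norm_num [hB₀.act_zero]
      have h := hμ1 (B₀.act (-1) (C'.toFun y))
      rw [hact1] at h
      show C'.lam y - C'.t (B₀.act (-1) (C'.toFun y)) + μ (B₀.act (-1) (C'.toFun y))
        = C'.lam y + μ (C'.toFun y) + - C.t (B₀.act (-1) (C'.toFun y))
      linear_combination -h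
    · show C'.lam (C'.B.tau y) + μ (C'.toFun (C'.B.tau y)) = _
      rw [C'.lam_tau, C'.htauc]
      have h := hμ2 (C'.toFun y)
      show C'.lam y + C'.u (C'.toFun y) + μ (B₀.tau (C'.toFun y))
        = C'.lam y + μ (C'.toFun y) + C.u (C'.toFun y)
      linear_combination h
  have hsum := psi_sum C.toFun (cover_step_commute C) C.lam D hinc
  have hsum' : ∀ (l : List Step) (x : C'.B.E),
      C'.lam (C'.B.endpt x l) + μ (C'.toFun (C'.B.endpt x l))
        = (C'.lam x + μ (C'.toFun x)) + SDelta B₀ D (C'.toFun x) l :=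
    psi_sum C'.toFun (cover_step_commute C')
      (fun y => C'.lam y + μ (C'.toFun y)) D hinc'
  have huniq : ∀ l l' : List Step, C.B.endpt x₀ l = C.B.endpt x₀ l' →
      C'.B.endpt y₀ l = C'.B.endpt y₀ l' := by
    intro l l' heq
    have hπ : C'.toFun (C'.B.endpt y₀ l) = C'.toFun (C'.B.endpt y₀ l') := by
      rw [C'.toFun_endpt, C'.toFun_endpt, ← hxy, ← C.toFun_endpt, ← C.toFun_endpt, heq]
    have hSD : SDelta B₀ D (C.toFun x₀) l = SDelta B₀ D (C.toFun x₀) l' := by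
      have e1 := hsum l x₀
      have e2 := hsum l' x₀
      rw [heq] at e1
      exact add_left_cancel (e1.symm.trans e2)
    have hΨeq : C'.lam (C'.B.endpt y₀ l) + μ (C'.toFun (C'.B.endpt y₀ l))
        = C'.lam (C'.B.endpt y₀ l') + μ (C'.toFun (C'.B.endpt y₀ l')) := by
      rw [hsum' l y₀, hsum' l' y₀, ← hxy, hSD]
    rw [hπ] at hΨeq
    have hlam : C'.lam (C'.B.endpt y₀ l) = C'.lam (C'.B.endpt y₀ l') :=
      add_right_cancel hΨeq
    exact C'.fiber_inj hπ hlam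
  refine ⟨fun x => C'.B.endpt y₀ (Classical.choose (C.hconn x₀ x)), ?_⟩
  intro x l hl
  exact huniq _ l ((Classical.choose_spec (C.hconn x₀ x)).2.trans hl.symm)

/-- Two covers over the same `B₀` (a tree-like modified Brauer graph) with the
same order `r` are isomorphic. -/
theorem iso_of_covers {B₀ : BrauerData} (hB₀ : B₀.IsBrauer) (hU₀ : B₀.U = Set.univ)
    (hdeg1 : ∀ e : B₀.E, B₀.act (B₀.d e) e = e ∧
      ∀ j : ℕ, 0 < j → B₀.act j e = e → B₀.d e ≤ j)
    (hfin₀ : Finite B₀.E) (hne₀ : Nonempty B₀.E)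
    (r k n : ℕ) [NeZero r] (hkn : n = k + 1)
    (hvert : Nat.card (VertexQuot B₀) = n) (hedge : Nat.card (EdgeQuot B₀) = k)
    (C C' : Cover B₀ r) : IsIsoBrauer C.B C'.B := by
  haveI := hne₀
  have hconn₀ : ∀ e e' : B₀.E, ∃ l : List Step, B₀.endpt e l = e' := by
    intro e e'
    obtain ⟨l, -, hl⟩ := C.hconn (C.s e) (C.s e')
    exact ⟨l, by rw [← C.s_spec e, ← C.toFun_endpt, hl, C.s_spec]⟩
  have hA : ∀ e, ∑ j ∈ Finset.range (B₀.d e),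
      (C.t (B₀.act (j:ℤ) e) - C'.t (B₀.act (j:ℤ) e)) = 0 := by
    intro e
    rw [Finset.sum_sub_distrib, C.t_sum hB₀ hdeg1, C'.t_sum hB₀ hdeg1, sub_self]
  have hW1 : ∀ e, (C.u (B₀.tau e) - C'.u (B₀.tau e)) = -(C.u e - C'.u e) := by
    intro e
    have h1 := C.u_add hB₀ hU₀ e
    have h2 := C'.u_add hB₀ hU₀ e
    linear_combination h1 - h2
  have hW2 : ∀ e, B₀.tau e = e → C.u e - C'.u e = 0 := by
    intro e he
    have h1 := C.u_add hB₀ hU₀ e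
    have h2 := C'.u_add hB₀ hU₀ e
    rw [he] at h1 h2
    have h3 := zmod_two_torsion r h1 h2 (C.u_ne_zero he) (C'.u_ne_zero he)
    rw [h3, sub_self]
  obtain ⟨μ, hμ1, hμ2⟩ := solve_potential hB₀ hU₀ hdeg1 hfin₀ hne₀ hconn₀ r k n hkn
    hvert hedge (fun e => C.t e - C'.t e) (fun e => C.u e - C'.u e) hA hW1 hW2
  set b₀ := Classical.arbitrary B₀.E with hb₀
  set x₀ := C.s b₀ with hx₀
  set y₀ := C'.s b₀ with hy₀
  have hxy : C.toFun x₀ = C'.toFun y₀ := by rw [C.s_spec, C'.s_spec]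
  obtain ⟨F, hF⟩ := exists_halfmap hB₀ C C' μ hμ1 hμ2 x₀ y₀ hxy
  obtain ⟨G, hG⟩ := exists_halfmap hB₀ C' C (fun e => - μ e)
    (fun e => by have h := hμ1 e; linear_combination -h)
    (fun e => by have h := hμ2 e; linear_combination -h) y₀ x₀ hxy.symm
  have hFx : ∀ x, ∃ l, C.B.endpt x₀ l = x ∧ F x = C'.B.endpt y₀ l := by
    intro x
    obtain ⟨l, -, hl⟩ := C.hconn x₀ x
    exact ⟨l, hl, hF x l hl⟩
  have hGy : ∀ y, ∃ l, C'.B.endpt y₀ l = y ∧ G y = C.B.endpt x₀ l := by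
    intro y
    obtain ⟨l, -, hl⟩ := C'.hconn y₀ y
    exact ⟨l, hl, hG y l hl⟩
  have hπF : ∀ x, C'.toFun (F x) = C.toFun x := by
    intro x
    obtain ⟨l, hl, hFl⟩ := hFx x
    rw [hFl, C'.toFun_endpt, ← hxy, ← C.toFun_endpt, hl]
  have hπG : ∀ y, C.toFun (G y) = C'.toFun y := by
    intro y
    obtain ⟨l, hl, hGl⟩ := hGy y
    rw [hGl, C.toFun_endpt, hxy, ← C'.toFun_endpt, hl]
  have hFact : ∀ (m : ℤ) (x : C.B.E), F (C.B.act m x) = C'.B.act m (F x) := by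
    intro m x
    obtain ⟨l, hl, hFl⟩ := hFx x
    have h1 : C.B.endpt x₀ (l ++ gSteps m) = C.B.act m x := by
      rw [C.B.endpt_append, hl, endpt_gSteps C.hB]
    rw [hF _ _ h1, C'.B.endpt_append, ← hFl, endpt_gSteps C'.hB]
  have hFtau : ∀ x, F (C.B.tau x) = C'.B.tau (F x) := by
    intro x
    obtain ⟨l, hl, hFl⟩ := hFx x
    have h1 : C.B.endpt x₀ (l ++ [Step.tau]) = C.B.tau x := by
      rw [C.B.endpt_append, hl]
      rfl
    rw [hF _ _ h1, C'.B.endpt_append, ← hFl]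
    rfl
  have hGact : ∀ (m : ℤ) (y : C'.B.E), G (C'.B.act m y) = C.B.act m (G y) := by
    intro m y
    obtain ⟨l, hl, hGl⟩ := hGy y
    have h1 : C'.B.endpt y₀ (l ++ gSteps m) = C'.B.act m y := by
      rw [C'.B.endpt_append, hl, endpt_gSteps C'.hB]
    rw [hG _ _ h1, C.B.endpt_append, ← hGl, endpt_gSteps C.hB]
  have hGtau : ∀ y, G (C'.B.tau y) = C.B.tau (G y) := by
    intro y
    obtain ⟨l, hl, hGl⟩ := hGy y
    have h1 : C'.B.endpt y₀ (l ++ [Step.tau]) = C'.B.tau y := by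
      rw [C'.B.endpt_append, hl]
      rfl
    rw [hG _ _ h1, C.B.endpt_append, ← hGl]
    rfl
  refine ⟨F, G, ⟨hFact, fun e _ => by rw [C'.hU]; trivial,
    fun e _ => hFtau e, fun x => ?_⟩,
    ⟨hGact, fun e _ => by rw [C.hU]; trivial, fun e _ => hGtau e, fun y => ?_⟩,
    fun x => ?_, fun y => ?_⟩
  · rw [← C'.hd (F x), hπF, C.hd]
  · rw [← C.hd (G y), hπG, C'.hd]
  · obtain ⟨l, hl, hFl⟩ := hFx x
    rw [hG (F x) l hFl.symm, hl]
  · obtain ⟨l, hl, hGl⟩ := hGy y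
    rw [hF (G y) l hGl.symm, hl]

end Main
/-- Let `E₁`, `E₂` be finite connected `f_ms`-BGs whose Nakayama
automorphisms have the same order `r`, and whose quotients `Eᵢ/⟨σᵢ⟩` are both
isomorphic to a common modified Brauer graph `B₀` having exactly `2` double
half-edges, `k` edges, `n = k + 1` vertices, and all vertices of f-degree `1`.
Then `E₁ ≅ E₂` as Brauer `G`-sets. -/
theorem case1_determined_by_quotient_and_order (B₁ B₂ : BrauerData)
    (hB₁ : B₁.IsBrauer) (hB₂ : B₂.IsBrauer)
    (hU₁ : B₁.U = Set.univ) (hU₂ : B₂.U = Set.univ)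
    (htau₁ : ∀ e : B₁.E, B₁.tau e ≠ e) (htau₂ : ∀ e : B₂.E, B₂.tau e ≠ e)
    (hfin₁ : Finite B₁.E) (hfin₂ : Finite B₂.E)
    (hconn₁ : B₁.Connected) (hconn₂ : B₂.Connected)
    (r : ℕ) (hr₁ : IsOrderOf B₁ r) (hr₂ : IsOrderOf B₂ r)
    (B₀ : BrauerData) (hB₀ : B₀.IsBrauer) (hU₀ : B₀.U = Set.univ)
    (k n : ℕ) (hkn : n = k + 1)
    (hdeg1 : ∀ e : B₀.E, B₀.act (B₀.d e) e = e ∧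
      ∀ j : ℕ, 0 < j → B₀.act j e = e → B₀.d e ≤ j)
    (hdbl : Nat.card {e : B₀.E // e ∈ B₀.U ∧ B₀.tau e = e} = 2)
    (hedge : Nat.card (EdgeQuot B₀) = k)
    (hvert : Nat.card (VertexQuot B₀) = n)
    (hiso₁ : IsIsoBrauer (sigmaQuot B₁ hB₁ hU₁) B₀)
    (hiso₂ : IsIsoBrauer (sigmaQuot B₂ hB₂ hU₂) B₀) :
    IsIsoBrauer B₁ B₂ := by
  haveI : NeZero r := ⟨hr₁.1.ne'⟩
  obtain ⟨C₁, hC₁⟩ := mk_cover B₁ hB₁ hU₁ htau₁ hconn₁ r hr₁ B₀ hiso₁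
  obtain ⟨C₂, hC₂⟩ := mk_cover B₂ hB₂ hU₂ htau₂ hconn₂ r hr₂ B₀ hiso₂
  have hfinC : Finite C₁.B.E := by rw [hC₁]; exact hfin₁
  have hfin₀ : Finite B₀.E := Finite.of_surjective C₁.toFun C₁.hsurj
  have hne₀ : Nonempty B₀.E := by
    by_contra hemp
    rw [not_nonempty_iff] at hemp
    haveI : IsEmpty {e : B₀.E // e ∈ B₀.U ∧ B₀.tau e = e} :=
      ⟨fun a => hemp.elim a.1⟩
    rw [Nat.card_of_isEmpty] at hdbl
    exact two_ne_zero hdbl.symm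
  rw [← hC₁, ← hC₂]
  exact iso_of_covers hB₀ hU₀ hdeg1 hfin₀ hne₀ r k n hkn hvert hedge C₁ C₂

end FB
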